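/- arXiv:1906.05905 — 2 statements merged into one kernel-verified Lean document; each statement's English description precedes it below -/
import Mathlib

section
/- Let H be a Hilbert space and ρ a positive injective trace-class operator. Then the range of the map i_ρ(x) = ρ^{1/4} x ρ^{1/4}, for x ranging over B(H), is dense in the Hilbert space S₂(H) of Hilbert-Schmidt operators. -/
/-!
Identify `S₂(H)` with `ℓ²(ι, H)` through `T ↦ (T (b i))ᵢ`. The operator `A = ρ^{1/4}` is
self-adjoint, and injective because `ρ = ρ^{3/4} ρ^{1/4}`, so it has dense range. The operators
`A x A` include every rank-one operator `|A u⟩⟨A v| = A |u⟩⟨v| A`; since `(u, v) ↦ |u⟩⟨v|` is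
continuous into `S₂` (its Hilbert-Schmidt norm is `‖u‖ ‖v‖`), their closure contains all
`|u⟩⟨b j|`, which are the finitely supported sequences `lp.single 2 j u` spanning a dense
subspace of `ℓ²(ι, H)`.
-/

open scoped NNReal ENNReal

section Lp

variable {ι : Type*} {E : ι → Type*} [∀ i, NormedAddCommGroup (E i)]

theorem memℓp_two_iff_summable_sq {f : ∀ i, E i} :
    Memℓp f 2 ↔ Summable fun i => ‖f i‖ ^ 2 := by
  simp [memℓp_gen_iff (p := 2) (by norm_num)]

theorem lp.norm_two_eq_sqrt_tsum (f : lp E 2) : ‖f‖ = √(∑' i, ‖f i‖ ^ 2) := by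
  simp [lp.norm_eq_tsum_rpow (p := 2) (by norm_num), Real.sqrt_eq_rpow]

theorem lp.mem_of_forall_single_mem [DecidableEq ι] {p : ℝ≥0∞} [Fact (1 ≤ p)] (hp : p ≠ ∞)
    {K : AddSubgroup (lp E p)} (hK : IsClosed (K : Set (lp E p))) (f : lp E p)
    (hf : ∀ i, lp.single p i (f i) ∈ K) : f ∈ K :=
  hK.mem_of_tendsto (lp.hasSum_single hp f) (.of_forall fun _ => K.sum_mem fun i _ => hf i)

end Lp

open InnerProductSpace

namespace HilbertBasis

variable {ι 𝕜 E F : Type*} [RCLike 𝕜] [NormedAddCommGroup E] [InnerProductSpace 𝕜 E]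
  [NormedAddCommGroup F] [NormedSpace 𝕜 F] (b : HilbertBasis ι 𝕜 E)

theorem hasSum_norm_inner_sq (v : E) : HasSum (fun i => ‖⟪v, b i⟫_𝕜‖ ^ 2) (‖v‖ ^ 2) := by
  have hsum := memℓp_two_iff_summable_sq.1 (lp.memℓp (b.repr v))
  have hnorm := lp.norm_two_eq_sqrt_tsum (b.repr v)
  rw [b.repr.norm_map] at hnorm
  simp only [b.repr_apply_apply, norm_inner_symm] at hsum hnorm
  rw [hnorm, Real.sq_sqrt (tsum_nonneg fun i => by positivity)]
  exact hsum.hasSum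

theorem memℓp_inner_smul (u : F) (v : E) : Memℓp (fun i => ⟪v, b i⟫_𝕜 • u) 2 :=
  memℓp_two_iff_summable_sq.2 <| by
    simpa only [norm_smul, mul_pow] using
      ((b.hasSum_norm_inner_sq v).mul_right (‖u‖ ^ 2)).summable

/-- The `ℓ²` sequence `(rankOne 𝕜 u v (b i))ᵢ = (⟪v, b i⟫ • u)ᵢ`, of norm `‖u‖ * ‖v‖`. -/
noncomputable def rankOneLp : F →L[𝕜] E →L⋆[𝕜] lp (fun _ : ι => F) 2 :=
  LinearMap.mkContinuous₂
    (LinearMap.mk₂'ₛₗ (RingHom.id 𝕜) (starRingEnd 𝕜)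
      (fun u v => ⟨fun i => ⟪v, b i⟫_𝕜 • u, b.memℓp_inner_smul u v⟩)
      (fun u u' v => lp.ext <| funext fun i => smul_add _ u u')
      (fun c u v => lp.ext <| funext fun i => smul_comm _ c u)
      (fun u v v' => lp.ext <| funext fun i => by simp only [inner_add_left, add_smul]; rfl)
      (fun c u v => lp.ext <| funext fun i => by simp [inner_smul_left, mul_smul]))
    1 fun u v => by
      refine le_of_eq ?_
      rw [one_mul, lp.norm_two_eq_sqrt_tsum]
      simp only [LinearMap.mk₂'ₛₗ_apply, norm_smul, mul_pow]
      rw [((b.hasSum_norm_inner_sq v).mul_right (‖u‖ ^ 2)).tsum_eq, ← mul_pow, mul_comm,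
        Real.sqrt_sq (by positivity)]

@[simp]
theorem rankOneLp_apply (u : F) (v : E) (i : ι) : b.rankOneLp u v i = ⟪v, b i⟫_𝕜 • u := rfl

theorem rankOneLp_self [DecidableEq ι] (u : F) (j : ι) :
    b.rankOneLp u (b j) = lp.single 2 j u := by
  ext i
  rw [rankOneLp_apply, lp.single_apply, orthonormal_iff_ite.1 b.orthonormal]
  split_ifs with h
  · subst h; simp
  · simp [Ne.symm h]

/-- The image of the Hilbert-Schmidt operators in `S` under `T ↦ (T (b i))ᵢ`. -/
def imageLp (S : Submodule 𝕜 (E →L[𝕜] F)) : Submodule 𝕜 (lp (fun _ : ι => F) 2) where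
  carrier := {f | ∃ T ∈ S, ∀ i, f i = T (b i)}
  add_mem' := by
    rintro _ _ ⟨T, hT, hf⟩ ⟨T', hT', hg⟩
    exact ⟨T + T', S.add_mem hT hT', fun i => by simp [hf, hg]⟩
  zero_mem' := ⟨0, S.zero_mem, fun _ => rfl⟩
  smul_mem' := by
    rintro c _ ⟨T, hT, hf⟩
    exact ⟨c • T, S.smul_mem c hT, fun i => by simp [hf]⟩

theorem rankOneLp_mem_imageLp {S : Submodule 𝕜 (E →L[𝕜] F)} {u : F} {v : E}
    (h : rankOne 𝕜 u v ∈ S) : b.rankOneLp u v ∈ b.imageLp S :=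
  ⟨rankOne 𝕜 u v, h, fun _ => rfl⟩

/-- Since `(rankOne 𝕜 u (b j) (b i))ᵢ = lp.single 2 j u`, it suffices that `S` contains the
rank-one operators with `u` and `v` from dense sets. -/
theorem dense_imageLp {S : Submodule 𝕜 (E →L[𝕜] F)} {U : Set F} {V : Set E}
    (hU : Dense U) (hV : Dense V) (hS : ∀ u ∈ U, ∀ v ∈ V, rankOne 𝕜 u v ∈ S) :
    Dense (b.imageLp S : Set (lp (fun _ : ι => F) 2)) := by
  classical
  set K := (b.imageLp S).topologicalClosure
  have hK : IsClosed (K : Set (lp (fun _ : ι => F) 2)) :=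
    (b.imageLp S).isClosed_topologicalClosure
  have hmem_of_mem (v : E) (hv : v ∈ V) (u : F) : b.rankOneLp u v ∈ K :=
    hU.induction
      (fun u hu => (b.imageLp S).le_topologicalClosure (b.rankOneLp_mem_imageLp (hS u hu v hv)))
      (hK.preimage (b.rankOneLp.continuous.eval_const v)) u
  have hmem (u : F) (v : E) : b.rankOneLp u v ∈ K :=
    hV.induction (fun v hv => hmem_of_mem v hv u) (hK.preimage (b.rankOneLp u).continuous) v
  rw [dense_iff_closure_eq, ← Submodule.topologicalClosure_coe, Set.eq_univ_iff_forall]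
  exact fun f => lp.mem_of_forall_single_mem (K := K.toAddSubgroup) ENNReal.ofNat_ne_top hK f
    fun j => b.rankOneLp_self (f j) j ▸ hmem (f j) (b j)

end HilbertBasis

section Operators

variable {𝕜 H : Type*} [RCLike 𝕜] [NormedAddCommGroup H] [InnerProductSpace 𝕜 H]
  [CompleteSpace H]

theorem IsSelfAdjoint.mul_rankOne_mul {A : H →L[𝕜] H} (hA : IsSelfAdjoint A) (u v : H) :
    A * rankOne 𝕜 u v * A = rankOne 𝕜 (A u) (A v) := by
  have h (w : H) : ⟪A v, w⟫_𝕜 = ⟪v, A w⟫_𝕜 := hA.isSymmetric v w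
  ext w
  simp [h]

theorem IsSelfAdjoint.denseRange_of_injective {A : H →L[𝕜] H}
    (hA : IsSelfAdjoint A) (hinj : Function.Injective A) : DenseRange A := by
  have hker : A.ker = ⊥ := LinearMap.ker_eq_bot.2 hinj
  have horth : A.rangeᗮ = ⊥ := by rw [A.orthogonal_range, hA.adjoint_eq, hker]
  have hdense : Dense (A.range : Set H) := Submodule.dense_iff_topologicalClosure_eq_top.2 <|
    Submodule.topologicalClosure_eq_top_iff.2 horth
  rw [DenseRange]
  simpa only [LinearMap.coe_range, ContinuousLinearMap.coe_coe] using hdense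

end Operators

theorem ContinuousLinearMap.injective_nnrpow {H : Type*} [NormedAddCommGroup H]
    [InnerProductSpace ℂ H] [CompleteSpace H] {a : H →L[ℂ] H} (ha : 0 ≤ a)
    (hinj : Function.Injective a) {x : ℝ≥0} (hx₀ : 0 < x) (hx₁ : x < 1) :
    Function.Injective (a ^ x) := by
  have h : a ^ (1 - x) * a ^ x = a := by
    rw [← CFC.nnrpow_add (tsub_pos_of_lt hx₁) hx₀, tsub_add_cancel_of_le hx₁.le, CFC.nnrpow_one a]
  have hcomp : Function.Injective (a ^ (1 - x) * a ^ x) := by rwa [h]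
  exact Function.Injective.of_comp (f := a ^ (1 - x)) hcomp

theorem iRho_denseRange_S2_general
    {ι H : Type*} [NormedAddCommGroup H] [InnerProductSpace ℂ H] [CompleteSpace H]
    (b : HilbertBasis ι ℂ H) (ρ : H →L[ℂ] H) (hρpos : 0 ≤ ρ)
    (hinj : Function.Injective ρ)
    (y : H →L[ℂ] H) (hy : Summable fun i => ‖y (b i)‖ ^ 2)
    (ε : ℝ) (hε : 0 < ε) :
    ∃ x : H →L[ℂ] H,
      (Summable fun i => ‖(y - CFC.nnrpow ρ (1/4) * x * CFC.nnrpow ρ (1/4)) (b i)‖ ^ 2)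
        ∧ Real.sqrt (∑' i,
            ‖(y - CFC.nnrpow ρ (1/4) * x * CFC.nnrpow ρ (1/4)) (b i)‖ ^ 2) < ε := by
  set A := CFC.nnrpow ρ (1/4)
  have hA : IsSelfAdjoint A := IsSelfAdjoint.of_nonneg CFC.nnrpow_nonneg
  have hAdense : DenseRange A :=
    hA.denseRange_of_injective (ρ.injective_nnrpow hρpos hinj (by norm_num) (by norm_num))
  have hdense := b.dense_imageLp (S := LinearMap.range (LinearMap.mulLeftRight ℂ (A, A)))
    hAdense hAdense (by
      rintro _ ⟨u, rfl⟩ _ ⟨v, rfl⟩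
      exact ⟨rankOne ℂ u v, hA.mul_rankOne_mul u v⟩)
  let Y : lp (fun _ : ι => H) 2 := ⟨fun i => y (b i), memℓp_two_iff_summable_sq.2 hy⟩
  obtain ⟨Z, hZ, _, ⟨x, rfl⟩, hZx⟩ := Metric.dense_iff.1 hdense Y ε hε
  have hsub (i : ι) : (y - A * x * A) (b i) = (Y - Z) i := by
    rw [lp.coeFn_sub, Pi.sub_apply, hZx i]
    rfl
  rw [Metric.mem_ball, dist_comm, dist_eq_norm, lp.norm_two_eq_sqrt_tsum] at hZ
  exact ⟨x, by simpa only [hsub] using memℓp_two_iff_summable_sq.1 (lp.memℓp (Y - Z)),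
    by simpa only [hsub] using hZ⟩

/-- Let `H` be a Hilbert space and `ρ` a positive injective trace-class operator.
The range of `i_ρ(x) = ρ^{1/4} x ρ^{1/4}`, for `x` ranging over `B(H)`, is dense in
the Hilbert space `S₂(H)` of Hilbert-Schmidt operators: every Hilbert-Schmidt `y`
is approximated in Hilbert-Schmidt norm by elements `i_ρ(x)`. -/
theorem iRho_denseRange_S2
    {ι H : Type*} [NormedAddCommGroup H] [InnerProductSpace ℂ H] [CompleteSpace H]
    (b : HilbertBasis ι ℂ H) (ρ : H →L[ℂ] H) (hρpos : 0 ≤ ρ)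
    (htc : Summable fun i => ⟪b i, ρ (b i)⟫_ℂ)
    (hinj : Function.Injective ρ)
    (y : H →L[ℂ] H) (hy : Summable fun i => ‖y (b i)‖ ^ 2)
    (ε : ℝ) (hε : 0 < ε) :
    ∃ x : H →L[ℂ] H,
      (Summable fun i => ‖(y - CFC.nnrpow ρ (1/4) * x * CFC.nnrpow ρ (1/4)) (b i)‖ ^ 2)
        ∧ Real.sqrt (∑' i,
            ‖(y - CFC.nnrpow ρ (1/4) * x * CFC.nnrpow ρ (1/4)) (b i)‖ ^ 2) < ε :=
  iRho_denseRange_S2_general b ρ hρpos hinj y hy ε hε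
end

section
/- Let H be a Hilbert space and A a compact self-adjoint linear operator on the Hilbert space S₂(H). Then A satisfies A(a*) = (A(a))* for all a ∈ S₂(H) if and only if A admits a spectral decomposition A = Σ_n λ_n |x_n⟩⟨x_n| with all λ_n real and (x_n) an orthonormal basis of S₂(H) consisting of self-adjoint operators. -/
/-!
A compact self-adjoint `A` commuting with the conjugation `J` preserves each of its eigenspaces
(the eigenvalues are real), and `A` and `J` both preserve the orthogonal complement `W` of any
family of `J`-fixed eigenvectors. If `W ≠ 0`, the spectral theorem for compact self-adjoint
operators, applied to `A` on `W`, gives an eigenspace meeting `W`; this intersection is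
`J`-invariant, so it contains a `J`-fixed unit vector (normalise `u + J u`, or `i u` when
`J u = -u`). Hence a maximal orthonormal family of `J`-fixed eigenvectors is a Hilbert basis.
Conversely, with a `J`-fixed basis and real eigenvalues, `J` commutes with the expansion of `A`
term by term.
-/

open scoped InnerProductSpace ComplexOrder

open Module Module.End Submodule

section General
variable {𝕜 E : Type*} [RCLike 𝕜] [NormedAddCommGroup E] [InnerProductSpace 𝕜 E]

theorem Submodule.mem_orthogonal_span_iff {s : Set E} {w : E} :
    w ∈ (span 𝕜 s)ᗮ ↔ ∀ u ∈ s, ⟪u, w⟫_𝕜 = 0 := by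
  rw [← span_singleton_le_iff_mem, ← isOrtho_iff_le, isOrtho_comm, isOrtho_span]
  simp

theorem orthonormal_insert {s : Set E} {v : E} (hs : Orthonormal 𝕜 ((↑) : s → E))
    (hv : ‖v‖ = 1) (hvs : ∀ u ∈ s, ⟪u, v⟫_𝕜 = 0) :
    Orthonormal 𝕜 ((↑) : ↥(insert v s) → E) := by
  classical
  have hvs' : v ∉ s := fun h => by simpa [hv] using hvs v h
  rw [orthonormal_subtype_iff_ite] at hs ⊢
  rintro u (rfl | hu) w (rfl | hw)
  · simp [hv]
  · rw [if_neg (ne_of_mem_of_not_mem hw hvs').symm, ← inner_conj_symm, hvs w hw, map_zero]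
  · rw [if_neg (ne_of_mem_of_not_mem hu hvs'), hvs u hu]
  · exact hs u hu w hw

theorem exists_hilbertBasis_subset [CompleteSpace E] {P : Set E}
    (hP : ∀ s ⊆ P, Orthonormal 𝕜 ((↑) : s → E) → (span 𝕜 s)ᗮ ≠ ⊥ →
      ∃ v ∈ P, ‖v‖ = 1 ∧ v ∈ (span 𝕜 s)ᗮ) :
    ∃ (s : Set E) (b : HilbertBasis s 𝕜 E), s ⊆ P ∧ ⇑b = (↑) := by
  obtain ⟨s, hs⟩ := zorn_subset {t | t ⊆ P ∧ Orthonormal 𝕜 ((↑) : t → E)}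
    fun c hc hchain => ⟨⋃₀ c, ⟨Set.sUnion_subset fun t ht => (hc ht).1,
      orthonormal_sUnion_of_directed hchain.directedOn fun t ht => (hc ht).2⟩,
      fun _ => Set.subset_sUnion_of_mem⟩
  obtain ⟨hsP, hson⟩ := hs.prop
  have hspan : (span 𝕜 (Set.range ((↑) : s → E)))ᗮ = ⊥ := by
    rw [Subtype.range_coe]
    by_contra hne
    obtain ⟨v, hvP, hv1, hvs⟩ := hP s hsP hson hne
    have hvs' := mem_orthogonal_span_iff.1 hvs
    have hv : v ∉ s := fun h => by simpa [hv1] using hvs' v h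
    exact hv (hs.2 ⟨Set.insert_subset hvP hsP, orthonormal_insert hson hv1 hvs'⟩
      (Set.subset_insert v s) (Set.mem_insert v s))
  exact ⟨s, .mkOfOrthogonalEqBot hson hspan, hsP, HilbertBasis.coe_mkOfOrthogonalEqBot _ _⟩

theorem IsCompactOperator.exists_inf_eigenspace_ne_bot {T : E →L[𝕜] E}
    (hT : IsCompactOperator T) (hT' : T.IsSymmetric) {V : Submodule 𝕜 E} [CompleteSpace V]
    (hV : ∀ v ∈ V, T v ∈ V) (hV0 : V ≠ ⊥) :
    ∃ μ, V ⊓ eigenspace (T : End 𝕜 E) μ ≠ ⊥ := by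
  by_contra! h
  have hS := ContinuousLinearMap.orthogonalComplement_iSup_eigenspaces_eq_bot
    (T := T.restrict hV) (hT.restrict' hV) (hT'.restrict_invariant hV)
  have hbot : ∀ μ, eigenspace ((T.restrict hV : V →L[𝕜] V) : End 𝕜 V) μ = ⊥ := fun μ =>
    eigenspace_restrict_eq_bot hV (by rw [disjoint_iff, inf_comm, h μ])
  simp only [hbot, iSup_bot, bot_orthogonal_eq_top] at hS
  have : Subsingleton (Submodule 𝕜 V) := _root_.subsingleton_iff_bot_eq_top.1 hS.symm
  exact hV0 (Submodule.subsingleton_iff_eq_bot.1 (Submodule.subsingleton_iff 𝕜 |>.1 this))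

theorem HilbertBasis.apply_eq_tsum_of_apply_eq_smul {ι : Type*} (b : HilbertBasis ι 𝕜 E)
    (T : E →L[𝕜] E) {μ : ι → 𝕜} (hT : ∀ i, T (b i) = μ i • b i) (v : E) :
    T v = ∑' i, μ i • ⟪b i, v⟫_𝕜 • b i := by
  refine ((b.hasSum_repr v).mapL T).tsum_eq.symm.trans (tsum_congr fun i => ?_)
  simp [b.repr_apply_apply, hT, smul_smul, mul_comm]

end General

open ComplexConjugate

section Conjugation
variable {E : Type*} [NormedAddCommGroup E] [InnerProductSpace ℂ E] (J : E →ₗ⋆[ℂ] E)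

theorem inner_map_eq_conj_inner_of_map_eq_self (hJinner : ∀ a c, ⟪J a, J c⟫_ℂ = ⟪c, a⟫_ℂ)
    {x : E} (hx : J x = x) (a : E) : ⟪x, J a⟫_ℂ = conj ⟪x, a⟫_ℂ := by
  calc ⟪x, J a⟫_ℂ = ⟪J x, J a⟫_ℂ := by rw [hx]
    _ = conj ⟪x, a⟫_ℂ := by rw [hJinner, inner_conj_symm]

theorem continuous_of_inner_map_map (hJinner : ∀ a c, ⟪J a, J c⟫_ℂ = ⟪c, a⟫_ℂ) :
    Continuous J :=
  AddMonoidHomClass.continuous_of_bound J 1 fun a => by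
    rw [one_mul, norm_eq_sqrt_re_inner (𝕜 := ℂ), hJinner, ← norm_eq_sqrt_re_inner]

theorem map_mem_orthogonal_span (hJinner : ∀ a c, ⟪J a, J c⟫_ℂ = ⟪c, a⟫_ℂ) {s : Set E}
    (hs : ∀ x ∈ s, J x = x) {w : E} (hw : w ∈ (span ℂ s)ᗮ) : J w ∈ (span ℂ s)ᗮ := by
  rw [mem_orthogonal_span_iff] at hw ⊢
  intro u hu
  rw [inner_map_eq_conj_inner_of_map_eq_self J hJinner (hs u hu), hw u hu, map_zero]

theorem exists_norm_eq_one_map_eq_self (hJinv : Function.Involutive J) {V : Submodule ℂ E}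
    (hV : ∀ v ∈ V, J v ∈ V) (hV0 : V ≠ ⊥) : ∃ v ∈ V, ‖v‖ = 1 ∧ J v = v := by
  suffices ∃ v ∈ V, v ≠ 0 ∧ J v = v by
    obtain ⟨v, hvV, hv0, hJv⟩ := this
    refine ⟨(‖v‖⁻¹ : ℂ) • v, V.smul_mem _ hvV, norm_smul_inv_norm hv0, ?_⟩
    rw [map_smulₛₗ, hJv, ← Complex.ofReal_inv, Complex.conj_ofReal]
  obtain ⟨u, huV, hu0⟩ := V.exists_mem_ne_zero_of_ne_bot hV0
  by_cases h : u + J u = 0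
  · refine ⟨Complex.I • u, V.smul_mem _ huV, smul_ne_zero Complex.I_ne_zero hu0, ?_⟩
    rw [map_smulₛₗ, eq_neg_of_add_eq_zero_right h, Complex.conj_I, smul_neg, neg_smul, neg_neg]
  · exact ⟨u + J u, V.add_mem huV (hV u huV), h, by rw [map_add, hJinv u, add_comm]⟩

theorem map_mem_eigenspace {A : E →ₗ[ℂ] E} (hAJ : ∀ a, A (J a) = J (A a)) {μ : ℝ} {v : E}
    (hv : v ∈ eigenspace A μ) : J v ∈ eigenspace A μ := by
  rw [mem_eigenspace_iff] at hv ⊢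
  rw [hAJ, hv, map_smulₛₗ, Complex.conj_ofReal]

theorem exists_hilbertBasis_map_eq_self_eigenvectors [CompleteSpace E]
    (hJinner : ∀ a c, ⟪J a, J c⟫_ℂ = ⟪c, a⟫_ℂ) (hJinv : Function.Involutive J)
    {A : E →L[ℂ] E} (hA : IsCompactOperator A) (hsym : A.IsSymmetric)
    (hAJ : ∀ a, A (J a) = J (A a)) :
    ∃ (s : Set E) (b : HilbertBasis s ℂ E),
      s ⊆ {v | J v = v ∧ ∃ μ : ℝ, A v = (μ : ℂ) • v} ∧ ⇑b = (↑) := by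
  refine exists_hilbertBasis_subset fun s hsP _ hW => ?_
  have hAW : ∀ w ∈ (span ℂ s)ᗮ, A w ∈ (span ℂ s)ᗮ := fun w hw => by
    rw [mem_orthogonal_span_iff] at hw ⊢
    intro u hu
    obtain ⟨μ, hμ⟩ := (hsP hu).2
    rw [← hsym.apply_clm, hμ, inner_smul_left, hw u hu, mul_zero]
  have hJW : ∀ w ∈ (span ℂ s)ᗮ, J w ∈ (span ℂ s)ᗮ := fun w =>
    map_mem_orthogonal_span J hJinner fun x hx => (hsP hx).1
  obtain ⟨μ, hμ⟩ := hA.exists_inf_eigenspace_ne_bot hsym hAW hW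
  have hμ_real : (μ.re : ℂ) = μ :=
    Complex.conj_eq_iff_re.1 (hsym.conj_eigenvalue_eq_self (ne_bot_of_le_ne_bot hμ inf_le_right))
  rw [← hμ_real] at hμ
  obtain ⟨v, hvV, hv1, hJv⟩ := exists_norm_eq_one_map_eq_self J hJinv
    (fun v hv => mem_inf.2 ⟨hJW v hv.1, map_mem_eigenspace J hAJ hv.2⟩) hμ
  exact ⟨v, ⟨hJv, μ.re, mem_eigenspace_iff.1 hvV.2⟩, hv1, hvV.1⟩

theorem apply_map_eq_map_apply_of_eq_tsum (hJinner : ∀ a c, ⟪J a, J c⟫_ℂ = ⟪c, a⟫_ℂ)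
    (hJinv : Function.Involutive J) {ι : Type*} (x : HilbertBasis ι ℂ E)
    (hx : ∀ i, J (x i) = x i) (μ : ι → ℝ) {A : E → E}
    (hA : ∀ v, A v = ∑' i, μ i • ⟪x i, v⟫_ℂ • x i) (a : E) : A (J a) = J (A a) := by
  have hJ := continuous_of_inner_map_map J hJinner
  rw [hA, hA, hJinv.leftInverse.map_tsum (g := J) _ hJ hJ]
  refine tsum_congr fun i => ?_
  rw [← Complex.coe_smul, ← Complex.coe_smul, map_smulₛₗ, map_smulₛₗ, Complex.conj_ofReal, hx,
    inner_map_eq_conj_inner_of_map_eq_self J hJinner (hx i)]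

end Conjugation

/-- (Spectral decomposition of star-preserving compact self-adjoint operators on
`S₂(H)`.)  Let `E` be a complex Hilbert space equipped with a conjugation `J`
(a conjugate-linear involution with `⟪J a, J b⟫ = ⟪b, a⟫`; for `E = S₂(H)` this is
the adjoint operation `a ↦ a*`, and `J a = a` means that `a` is a self-adjoint
operator).  Let `A` be a compact self-adjoint operator on `E`.  Then `A` commutes
with `J` (i.e. `A(a*) = (A(a))*` for all `a`) if and only if `A = ∑ λ_n |x_n⟩⟨x_n|`
for some real numbers `λ_n` and a Hilbert basis `(x_n)` of `E` consisting of
`J`-fixed (self-adjoint) elements. -/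
theorem star_preserving_iff_selfadjoint_eigenbasis
    {E : Type*} [NormedAddCommGroup E] [InnerProductSpace ℂ E] [CompleteSpace E]
    (J : E → E)
    (hJadd : ∀ a c : E, J (a + c) = J a + J c)
    (hJsmul : ∀ (μ : ℂ) (a : E), J (μ • a) = (starRingEnd ℂ) μ • J a)
    (hJinv : Function.Involutive J)
    (hJinner : ∀ a c : E, ⟪J a, J c⟫_ℂ = ⟪c, a⟫_ℂ)
    (A : E →L[ℂ] E) (hA : IsCompactOperator A) (hsa : IsSelfAdjoint A) :
    (∀ a : E, A (J a) = J (A a)) ↔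
      ∃ (s : Set E) (x : HilbertBasis s ℂ E) (μ : s → ℝ),
        (∀ i : s, J (x i) = x i)
          ∧ ∀ v : E, A v = ∑' i : s, μ i • (⟪x i, v⟫_ℂ • x i) := by
  let J' : E →ₗ⋆[ℂ] E := { toFun := J, map_add' := hJadd, map_smul' := hJsmul }
  constructor
  · intro hAJ
    obtain ⟨s, x, hsP, hx⟩ := exists_hilbertBasis_map_eq_self_eigenvectors J' hJinner hJinv hA
      hsa.isSymmetric hAJ
    choose μ hμ using fun i : s => (hsP i.2).2
    refine ⟨s, x, μ, fun i => by rw [hx]; exact (hsP i.2).1, fun v => ?_⟩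
    rw [x.apply_eq_tsum_of_apply_eq_smul A fun i => by rw [hx]; exact hμ i]
    simp_rw [Complex.coe_smul]
  · rintro ⟨s, x, μ, hx, hA⟩
    exact apply_map_eq_map_apply_of_eq_tsum J' hJinner hJinv x hx μ hA
end
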